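/- Let γ : 𝔸 → S be a precomplete generalized numbering on a pca 𝔸 in which 0̄, 1̄ are separable. Then γ is not injective. -/

import Mathlib

/-- Partial application lifted to `Option` (strict: defined iff both sides defined). -/
def pap {A : Type*} (f : A → A → Option A) (x y : Option A) : Option A :=
  x.bind fun a => y.bind fun b => f a b

/-- A partial combinatory algebra, via Feferman's characterization with combinators `k`, `s`. -/
structure PCA (A : Type*) where
  app : A → A → Option A
  k : A
  s : A
  k_spec : ∀ a b : A, pap app (pap app (some k) (some a)) (some b) = some a
  s_defined : ∀ a b : A, (pap app (pap app (some s) (some a)) (some b)).isSome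
  s_spec : ∀ a b c : A,
    pap app (pap app (pap app (some s) (some a)) (some b)) (some c)
      = pap app (pap app (some a) (some c)) (pap app (some b) (some c))

namespace PCA
variable {A : Type*}

/-- Application on (possibly undefined) terms. -/
def ap (P : PCA A) (x y : Option A) : Option A := pap P.app x y

def K' (P : PCA A) : Option A := some P.k
def S' (P : PCA A) : Option A := some P.s
/-- The identity combinator `i = s·k·k`. -/
def i (P : PCA A) : Option A := P.ap (P.ap P.S' P.K') P.K'
/-- `true = k`. -/
def tru (P : PCA A) : Option A := P.K'
/-- `false = k·i`. -/
def fls (P : PCA A) : Option A := P.ap P.K' P.i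
/-- Pairing `⟨a,b⟩ = λ*z. z·a·b`, implemented as `s·(s·i·(k·a))·(k·b)`. -/
def pair (P : PCA A) (x y : Option A) : Option A :=
  P.ap (P.ap P.S' (P.ap (P.ap P.S' P.i) (P.ap P.K' x))) (P.ap P.K' y)
/-- Numerals: `0̄ = i`, `(n+1)‾ = ⟨false, n̄⟩`. -/
def numeral (P : PCA A) : ℕ → Option A
  | 0 => P.i
  | n + 1 => P.pair P.fls (P.numeral n)
/-- An element is total if it is defined on every argument. -/
def total (P : PCA A) (f : A) : Prop := ∀ a : A, (P.app f a).isSome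

end PCA

/-- `0̄` and `1̄` are separable in the pca `P`. -/
def PCA.Sep01 {A : Type*} (P : PCA A) : Prop :=
  ∃ c : A, P.total c ∧
    (∀ a : A, P.app c a = P.numeral 0 ∨ P.app c a = P.numeral 1) ∧
    ∀ a : A, (P.app c a = P.numeral 0 → some a ≠ P.numeral 1) ∧
             (P.app c a = P.numeral 1 → some a ≠ P.numeral 0)

/-!
Suppose every element `b` had a total extension. Let `c` separate `0̄, 1̄` and let `sw` swap
`0̄` and `1̄`. The diagonal element `b` with `b·x ≃ sw·(c·(x·x))` then has a total extension
`f`, and `d := f·f` satisfies `d = b·f = sw·(c·d)`: if `c·d = 0̄` then `d = 1̄`, and if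
`c·d = 1̄` then `d = 0̄`, both excluded by the choice of `c`. If `γ` were injective,
precompleteness would provide exactly such total extensions.
-/

namespace PCA

variable {A : Type*} (P : PCA A)

def Extends (f b : A) : Prop := ∀ a, (P.app b a).isSome → P.app f a = P.app b a

lemma ap_some_some (a b : A) : P.ap (some a) (some b) = P.app a b := rfl

lemma ap_ap_K' (x : Option A) (b : A) : P.ap (P.ap P.K' x) (some b) = x := by
  cases x with
  | none => rfl
  | some a => exact P.k_spec a b

lemma ap_ap_ap_S' (x y : Option A) (c : A) :
    P.ap (P.ap (P.ap P.S' x) y) (some c) = P.ap (P.ap x (some c)) (P.ap y (some c)) := by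
  cases x with
  | none => rfl
  | some a =>
    cases y with
    | none => simp [ap, pap]
    | some b => exact P.s_spec a b c

lemma isSome_ap_K' {x : Option A} (hx : x.isSome) : (P.ap P.K' x).isSome := by
  obtain ⟨a, rfl⟩ := Option.isSome_iff_exists.mp hx
  have h := P.ap_ap_K' (some a) P.k
  cases hk : P.ap P.K' (some a) with
  | none => rw [hk] at h; cases h
  | some e => rfl

lemma isSome_ap_ap_S' {x y : Option A} (hx : x.isSome) (hy : y.isSome) :
    (P.ap (P.ap P.S' x) y).isSome := by
  obtain ⟨a, rfl⟩ := Option.isSome_iff_exists.mp hx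
  obtain ⟨b, rfl⟩ := Option.isSome_iff_exists.mp hy
  exact P.s_defined a b

lemma isSome_i : P.i.isSome := P.s_defined P.k P.k

lemma isSome_fls : P.fls.isSome := P.isSome_ap_K' P.isSome_i

lemma isSome_pair {x y : Option A} (hx : x.isSome) (hy : y.isSome) : (P.pair x y).isSome :=
  P.isSome_ap_ap_S' (P.isSome_ap_ap_S' P.isSome_i (P.isSome_ap_K' hx)) (P.isSome_ap_K' hy)

lemma isSome_numeral (n : ℕ) : (P.numeral n).isSome := by
  induction n with
  | zero => exact P.isSome_i
  | succ n ih => exact P.isSome_pair P.isSome_fls ih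

lemma ap_i (a : A) : P.ap P.i (some a) = some a := by
  obtain ⟨e, he⟩ := Option.isSome_iff_exists.mp (P.isSome_ap_K' (x := some a) rfl)
  rw [i, ap_ap_ap_S']
  nth_rw 2 [he]
  exact P.ap_ap_K' _ _

lemma ap_ap_fls (a b : A) : P.ap (P.ap P.fls (some a)) (some b) = some b := by
  rw [fls, ap_ap_K', ap_i]

lemma ap_pair (x y : Option A) (z : A) : P.ap (P.pair x y) (some z) = P.ap (P.ap (some z) x) y := by
  rw [pair, ap_ap_ap_S', ap_ap_ap_S', ap_i, ap_ap_K', ap_ap_K']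

lemma ap_numeral_one (z : A) : P.ap (P.numeral 1) (some z) = P.ap (P.ap (some z) P.fls) P.i :=
  P.ap_pair _ _ z

lemma exists_app_eq_ap_app (g h : A) : ∃ e, ∀ x, P.app e x = P.ap (P.app g x) (P.app h x) := by
  obtain ⟨e, he⟩ := Option.isSome_iff_exists.mp (P.s_defined g h)
  exact ⟨e, fun x => by rw [← ap_some_some, ← he]; exact P.s_spec g h x⟩

lemma exists_app_eq_const (a : A) : ∃ e, ∀ x, P.app e x = some a := by
  obtain ⟨e, he⟩ := Option.isSome_iff_exists.mp (P.isSome_ap_K' (x := some a) rfl)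
  exact ⟨e, fun x => by rw [← ap_some_some, ← he, ap_ap_K']⟩

lemma exists_app_eq_self : ∃ e, ∀ x, P.app e x = some x := by
  obtain ⟨e, he⟩ := Option.isSome_iff_exists.mp P.isSome_i
  exact ⟨e, fun x => by rw [← ap_some_some, ← he, ap_i]⟩

lemma exists_app_eq_app_self : ∃ e, ∀ x, P.app e x = P.app x x := by
  obtain ⟨i, hi⟩ := P.exists_app_eq_self
  obtain ⟨e, he⟩ := P.exists_app_eq_ap_app i i
  exact ⟨e, fun x => by rw [he, hi, ap_some_some]⟩

lemma exists_app_eq_ap_const (h a : A) : ∃ e, ∀ x, P.app e x = P.ap (P.app h x) (some a) := by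
  obtain ⟨ka, hka⟩ := P.exists_app_eq_const a
  obtain ⟨e, he⟩ := P.exists_app_eq_ap_app h ka
  exact ⟨e, fun x => by rw [he, hka]⟩

lemma exists_app_eq_comp (g h : A) : ∃ e, ∀ x, P.app e x = P.ap (some g) (P.app h x) := by
  obtain ⟨kg, hkg⟩ := P.exists_app_eq_const g
  obtain ⟨e, he⟩ := P.exists_app_eq_ap_app kg h
  exact ⟨e, fun x => by rw [he, hkg]⟩

/-- `sw·y = y·k·1̄·0̄`: `0̄·k = k` and `1̄·k = fls` act as the booleans `true` and `false`. -/
lemma exists_swap_numeral_zero_one : ∃ sw,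
    P.ap (some sw) (P.numeral 0) = P.numeral 1 ∧ P.ap (some sw) (P.numeral 1) = P.numeral 0 := by
  obtain ⟨zero, hzero⟩ := Option.isSome_iff_exists.mp (P.isSome_numeral 0)
  obtain ⟨one, hone⟩ := Option.isSome_iff_exists.mp (P.isSome_numeral 1)
  obtain ⟨i, hi⟩ := P.exists_app_eq_self
  obtain ⟨e₁, he₁⟩ := P.exists_app_eq_ap_const i P.k
  obtain ⟨e₂, he₂⟩ := P.exists_app_eq_ap_const e₁ one
  obtain ⟨sw, hsw⟩ := P.exists_app_eq_ap_const e₂ zero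
  have hsw_app (y : A) :
      P.app sw y = P.ap (P.ap (P.ap (some y) (some P.k)) (some one)) (some zero) := by
    rw [hsw, he₂, he₁, hi]
  have h_zero_k : P.ap (some zero) (some P.k) = P.K' := by rw [← hzero]; exact P.ap_i P.k
  have h_one_k : P.ap (some one) (some P.k) = P.fls := by
    rw [← hone, ap_numeral_one, show P.i = some zero from hzero]
    exact P.ap_ap_K' _ _
  refine ⟨sw, ?_, ?_⟩
  · rw [hzero, ap_some_some, hsw_app, h_zero_k, ap_ap_K', hone]
  · rw [hone, ap_some_some, hsw_app, h_one_k, ap_ap_fls, hzero]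

theorem exists_forall_total_not_extends (hsep : P.Sep01) :
    ∃ b, ∀ f, P.total f → ¬ P.Extends f b := by
  obtain ⟨c, -, hc01, hcsep⟩ := hsep
  obtain ⟨sw, hsw0, hsw1⟩ := P.exists_swap_numeral_zero_one
  obtain ⟨w, hw⟩ := P.exists_app_eq_app_self
  obtain ⟨cw, hcw⟩ := P.exists_app_eq_comp c w
  obtain ⟨b, hb⟩ := P.exists_app_eq_comp sw cw
  refine ⟨b, fun f hf hfb => ?_⟩
  obtain ⟨d, hd⟩ := Option.isSome_iff_exists.mp (hf f)
  have hbf : P.app b f = P.ap (some sw) (P.app c d) := by rw [hb, hcw, hw, hd]; rfl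
  have hdiag (n : ℕ) (h : P.app b f = P.numeral n) : some d = P.numeral n := by
    rw [← hd, hfb f (h ▸ P.isSome_numeral n), h]
  rcases hc01 d with h0 | h1
  · exact (hcsep d).1 h0 (hdiag 1 (by rw [hbf, h0, hsw0]))
  · exact (hcsep d).2 h1 (hdiag 0 (by rw [hbf, h1, hsw1]))

lemma extends_of_injective {S : Type*} {γ : A → S} (hγ : Function.Injective γ) {f b : A}
    (hfb : ∀ a q, P.app b a = some q → ∃ p, P.app f a = some p ∧ γ p = γ q) :
    P.Extends f b := by
  intro a ha
  obtain ⟨q, hq⟩ := Option.isSome_iff_exists.mp ha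
  obtain ⟨p, hp, hpq⟩ := hfb a q hq
  rw [hp, hq, hγ hpq]

end PCA

theorem precomplete_generalized_numbering_not_injective_general {A S : Type*} (P : PCA A)
    (γ : A → S)
    (hpre : ∀ b : A, ∃ f : A, P.total f ∧
      ∀ a q : A, P.app b a = some q → ∃ p : A, P.app f a = some p ∧ γ p = γ q)
    (hsep : P.Sep01) :
    ¬ Function.Injective γ := by
  intro hγ
  obtain ⟨b, hb⟩ := P.exists_forall_total_not_extends hsep
  obtain ⟨f, hf, hfb⟩ := hpre b
  exact hb f hf (P.extends_of_injective hγ hfb)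

/-- A precomplete generalized numbering on a pca in which `0̄`,`1̄` are separable
is not injective. -/
theorem precomplete_generalized_numbering_not_injective {A S : Type*} (P : PCA A)
    (γ : A → S) (hsurj : Function.Surjective γ)
    (hpre : ∀ b : A, ∃ f : A, P.total f ∧
      ∀ a q : A, P.app b a = some q → ∃ p : A, P.app f a = some p ∧ γ p = γ q)
    (hsep : P.Sep01) :
    ¬ Function.Injective γ :=
  precomplete_generalized_numbering_not_injective_general P γ hpre hsep
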